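/- Let α be a weak composition with α_i = 0, and let γ satisfy s̃_i(α) ⊴ γ ⊴ qshift(s̃_i(α)) with γ_{i+1} = 0 and γ_i > 0. Then any weak composition β with β_j = γ_j for j ∉ {i,i+1}, 0 ≤ β_i ≤ γ_i − 1, and β_{i+1} = γ_i − β_i satisfies α ⊴ β ⊴ qshift(α). -/

import Mathlib

open scoped Classical in
/-- The fundamental shift of a weak composition `v`: working right to left, any
positive entry `a` of `v` with a `0` immediately to its left is reduced to `1`,
and the remaining `a − 1` is shifted left so as to sit immediately to the right
of the next nonzero entry to its left (or into position `1` if there is none);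
positive entries with a nonzero entry immediately to the left are unchanged,
and all other entries are `0`. -/
noncomputable def qshift (n : ℕ) (v : Fin n → ℕ) : Fin n → ℕ := fun p =>
  if v p ≠ 0 then
    (if (p : ℕ) = 0 ∨ v ⟨(p : ℕ) - 1, by omega⟩ ≠ 0 then v p else 1)
  else
    if (p : ℕ) = 0 ∨ v ⟨(p : ℕ) - 1, by omega⟩ ≠ 0 then
      (if h : (Finset.univ.filter fun q : Fin n => p < q ∧ v q ≠ 0).Nonempty then
        v ((Finset.univ.filter fun q : Fin n => p < q ∧ v q ≠ 0).min' h) - 1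
      else 0)
    else 0

/-- Dominance order on weak compositions of length `n`: `Dom n β γ` means every
partial sum of `β` is at most the corresponding partial sum of `γ`
(i.e. `β ⊴ γ`). -/
def Dom (n : ℕ) (β γ : Fin n → ℕ) : Prop :=
  ∀ j : Fin n, ∑ p ∈ Finset.univ.filter (· ≤ j), β p
    ≤ ∑ p ∈ Finset.univ.filter (· ≤ j), γ p

/-!
Write `psum v k` for the sum of the first `k` entries of `v`. The shift moves mass only to the
left, and the only mass it carries across the cut after position `p` is `a - 1`, where `a` is the
first nonzero entry after `p`, and only if `v p = 0`. Hence
`psum (qshift v) (p + 1) = psum v (p + 1) + carry v p`.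

Let `w` be `α` with the zero at `i` and the entry `α (i+1) ≠ 0` exchanged. The partial sums of
`qshift w` and `qshift α` agree at every cut except those after `i` and `i + 1`. After `i`,
`qshift w` is ahead by one, which is absorbed because `β` is behind `γ` by at least one there.
After `i + 1`, `γ` gains nothing (`γ (i+1) = 0`) while `qshift α` gains its entry `1` at `i + 1`.
If `α (i+1) = 0`, then `w = α` and `β ⊴ γ` suffices.
-/

open Finset

namespace WeakComposition

variable {n : ℕ}

def psum (v : Fin n → ℕ) (k : ℕ) : ℕ :=
  ∑ p ∈ univ.filter (fun p : Fin n => (p : ℕ) < k), v p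

theorem psum_zero (v : Fin n → ℕ) : psum v 0 = 0 := by
  simp [psum]

theorem psum_succ (v : Fin n → ℕ) (p : Fin n) : psum v (p + 1) = psum v p + v p := by
  have hs : univ.filter (fun q : Fin n => (q : ℕ) < p + 1)
      = insert p (univ.filter fun q : Fin n => (q : ℕ) < p) := by
    ext q
    simp only [mem_filter, mem_univ, true_and, mem_insert, Fin.ext_iff]
    omega
  rw [psum, hs, sum_insert (by simp), psum, add_comm]

theorem psum_congr {f g : Fin n → ℕ} {k : ℕ} (h : ∀ p : Fin n, (p : ℕ) < k → f p = g p) :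
    psum f k = psum g k :=
  sum_congr rfl fun p hp => h p (mem_filter.1 hp).2

theorem dom_iff {β γ : Fin n → ℕ} :
    Dom n β γ ↔ ∀ p : Fin n, psum β (p + 1) ≤ psum γ (p + 1) := by
  have h (v : Fin n → ℕ) (p : Fin n) : ∑ q ∈ univ.filter (· ≤ p), v q = psum v (p + 1) :=
    sum_congr (filter_congr fun q _ => by omega) fun _ _ => rfl
  simp only [Dom, h]

theorem _root_.Dom.psum_le {β γ : Fin n → ℕ} (h : Dom n β γ) {k : ℕ} (hk : k ≤ n) :
    psum β k ≤ psum γ k := by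
  rcases k with _ | k
  · simp [psum_zero]
  · exact dom_iff.1 h ⟨k, hk⟩

theorem psum_eq_of_eqOn_pair {a b : Fin n} (hab : (b : ℕ) = a + 1) {f g : Fin n → ℕ}
    (hfg : ∀ p, p ≠ a → p ≠ b → f p = g p) (hsum : f a + f b = g a + g b) {k : ℕ}
    (hk : k ≠ b) : psum f k = psum g k := by
  rcases le_or_gt k a with hka | hka
  · exact psum_congr fun p hp => hfg p (Fin.ne_of_val_ne (by omega)) (Fin.ne_of_val_ne (by omega))
  · have hs : ({a, b} : Finset (Fin n)) ⊆ univ.filter (fun p : Fin n => (p : ℕ) < k) := by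
      intro p
      simp only [mem_insert, mem_singleton, mem_filter, mem_univ, true_and]
      omega
    have hne : a ≠ b := Fin.ne_of_val_ne (by omega)
    unfold psum
    rw [← sum_sdiff hs, ← sum_sdiff hs (f := g), sum_pair hne, sum_pair hne, hsum]
    congr 1
    refine sum_congr rfl fun p hp => ?_
    simp only [mem_sdiff, mem_insert, mem_singleton, not_or] at hp
    exact hfg p hp.2.1 hp.2.2

def nextNonzero (v : Fin n → ℕ) (p : Fin n) : ℕ :=
  if h : (univ.filter fun q => p < q ∧ v q ≠ 0).Nonempty then
    v ((univ.filter fun q => p < q ∧ v q ≠ 0).min' h)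
  else 0

theorem nextNonzero_congr {v v' : Fin n → ℕ} {p : Fin n} (h : ∀ q, p < q → v q = v' q) :
    nextNonzero v p = nextNonzero v' p := by
  have hs : (univ.filter fun q => p < q ∧ v q ≠ 0) = univ.filter fun q => p < q ∧ v' q ≠ 0 :=
    filter_congr fun q _ => and_congr_right fun hq => by rw [h q hq]
  unfold nextNonzero
  simp only [hs]
  split_ifs with hne
  · exact h _ (mem_filter.1 (min'_mem _ hne)).2.1
  · rfl

theorem nextNonzero_eq_ite {v : Fin n → ℕ} {p q : Fin n} (hpq : (q : ℕ) = p + 1) :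
    nextNonzero v p = if v q = 0 then nextNonzero v q else v q := by
  split_ifs with hq
  · have hs : (univ.filter fun r => p < r ∧ v r ≠ 0) = univ.filter fun r => q < r ∧ v r ≠ 0 := by
      refine filter_congr fun r _ => ⟨fun ⟨hr, hv⟩ => ⟨?_, hv⟩, fun ⟨hr, hv⟩ => ⟨by omega, hv⟩⟩
      rcases eq_or_ne r q with rfl | hrq
      · exact absurd hq hv
      · have := Fin.val_ne_of_ne hrq
        omega
    unfold nextNonzero
    simp only [hs]
  · have hmem : q ∈ univ.filter fun r => p < r ∧ v r ≠ 0 := by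
      simp only [mem_filter, mem_univ, true_and]
      exact ⟨by omega, hq⟩
    unfold nextNonzero
    rw [dif_pos ⟨q, hmem⟩]
    congr
    refine le_antisymm (min'_le _ _ hmem) (le_min' _ _ _ fun r hr => ?_)
    simp only [mem_filter, mem_univ, true_and] at hr
    omega

theorem nextNonzero_eq_of_eqOn {v v' : Fin n → ℕ} {p m : Fin n} (hpm : p ≤ m)
    (h : ∀ q, p < q → q ≤ m → v q = v' q) (hm : nextNonzero v m = nextNonzero v' m) :
    nextNonzero v p = nextNonzero v' p := by
  obtain ⟨k, hk⟩ := p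
  obtain ⟨d, hd⟩ : ∃ d, (m : ℕ) = k + d := Nat.exists_eq_add_of_le hpm
  induction d generalizing k with
  | zero => obtain rfl : m = ⟨k, hk⟩ := Fin.ext hd; exact hm
  | succ d ih =>
    have hk1 : k + 1 < n := by omega
    have hnext := ih (k + 1) hk1 (Fin.le_def.2 (by simp only; omega))
      (fun q hq hqm => h q ((Fin.lt_def.2 (by simp only; omega)).trans hq) hqm)
      (by omega)
    rw [nextNonzero_eq_ite (p := ⟨k, hk⟩) (q := ⟨k + 1, hk1⟩) rfl,
      nextNonzero_eq_ite (p := ⟨k, hk⟩) (q := ⟨k + 1, hk1⟩) rfl,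
      h ⟨k + 1, hk1⟩ (Fin.lt_def.2 (by simp only; omega))
        (Fin.le_def.2 (by simp only; omega)), hnext]

def carry (v : Fin n → ℕ) (p : Fin n) : ℕ :=
  if v p = 0 then nextNonzero v p - 1 else 0

theorem qshift_apply_of_val_eq_zero (v : Fin n → ℕ) {p : Fin n} (hp : (p : ℕ) = 0) :
    qshift n v p = if v p = 0 then nextNonzero v p - 1 else v p := by
  unfold qshift nextNonzero
  split_ifs <;> simp_all

theorem qshift_apply_of_val_eq_succ (v : Fin n → ℕ) {p q : Fin n} (hpq : (q : ℕ) = p + 1) :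
    qshift n v q = if v q = 0 then (if v p = 0 then 0 else nextNonzero v q - 1)
      else (if v p = 0 then 1 else v q) := by
  have hp : (⟨(q : ℕ) - 1, by omega⟩ : Fin n) = p := Fin.ext (by simp only; omega)
  unfold qshift nextNonzero
  simp only [hp]
  split_ifs <;> simp_all

theorem psum_qshift (v : Fin n → ℕ) (p : Fin n) :
    psum (qshift n v) (p + 1) = psum v (p + 1) + carry v p := by
  obtain ⟨k, hk⟩ := p
  induction k with
  | zero =>
    rw [psum_succ, psum_succ, show ((⟨0, hk⟩ : Fin n) : ℕ) = 0 from rfl, psum_zero, psum_zero,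
      qshift_apply_of_val_eq_zero v rfl, carry]
    split_ifs <;> omega
  | succ k ih =>
    have ih := ih (by omega)
    simp only at ih
    rw [psum_succ, psum_succ, show ((⟨k + 1, hk⟩ : Fin n) : ℕ) = k + 1 from rfl, ih,
      qshift_apply_of_val_eq_succ v (p := ⟨k, by omega⟩) rfl, carry, carry,
      nextNonzero_eq_ite (p := ⟨k, by omega⟩) (q := ⟨k + 1, hk⟩) rfl]
    split_ifs <;> omega

section AdjacentSwap

open Equiv

variable {a b : Fin n} (hab : (b : ℕ) = a + 1) {α : Fin n → ℕ}
include hab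

theorem psum_comp_swap {k : ℕ} (hk : k ≠ b) : psum (α ∘ swap a b) k = psum α k :=
  psum_eq_of_eqOn_pair hab (fun p hpa hpb => by simp [swap_apply_of_ne_of_ne hpa hpb])
    (by simp [add_comm]) hk

section NonzeroRight

variable (h0 : α a = 0) (h1 : α b ≠ 0)
include h0 h1

theorem nextNonzero_comp_swap_of_lt {p : Fin n} (hp : p < a) :
    nextNonzero (α ∘ swap a b) p = nextNonzero α p := by
  obtain ⟨m, hma⟩ : ∃ m : Fin n, (a : ℕ) = m + 1 := ⟨⟨a - 1, by omega⟩, by simp only; omega⟩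
  refine nextNonzero_eq_of_eqOn (m := m) (by omega) (fun q _ hq => congrArg α
    (swap_apply_of_ne_of_ne (Fin.ne_of_val_ne (by omega)) (Fin.ne_of_val_ne (by omega)))) ?_
  rw [nextNonzero_eq_ite hma, nextNonzero_eq_ite hma, nextNonzero_eq_ite hab (v := α)]
  simp [h0, h1]

theorem carry_comp_swap {p : Fin n} (hpa : p ≠ a) (hpb : p ≠ b) :
    carry (α ∘ swap a b) p = carry α p := by
  have hnext : nextNonzero (α ∘ swap a b) p = nextNonzero α p := by
    rcases lt_or_gt_of_ne hpa with hp | hp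
    · exact nextNonzero_comp_swap_of_lt hab h0 h1 hp
    · have := Fin.val_ne_of_ne hpb
      exact nextNonzero_congr fun q hq => congrArg α
        (swap_apply_of_ne_of_ne (Fin.ne_of_val_ne (by omega)) (Fin.ne_of_val_ne (by omega)))
  simp only [carry, hnext, Function.comp_apply, swap_apply_of_ne_of_ne hpa hpb]

theorem psum_qshift_comp_swap_of_ne {p : Fin n} (hpa : p ≠ a) (hpb : p ≠ b) :
    psum (qshift n (α ∘ swap a b)) (p + 1) = psum (qshift n α) (p + 1) := by
  have hpb' : (p : ℕ) + 1 ≠ b := fun h => hpa (Fin.ext (by omega))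
  rw [psum_qshift, psum_qshift, psum_comp_swap hab hpb', carry_comp_swap hab h0 h1 hpa hpb]

theorem psum_qshift_comp_swap_left :
    psum (qshift n (α ∘ swap a b)) (a + 1) = psum (qshift n α) (a + 1) + 1 := by
  have hc : carry α a = α b - 1 := by rw [carry, if_pos h0, nextNonzero_eq_ite hab, if_neg h1]
  have hc' : carry (α ∘ swap a b) a = 0 := by simp [carry, h1]
  rw [psum_qshift, psum_qshift, hc, hc', psum_succ, psum_succ, psum_comp_swap hab (by omega)]
  simp only [Function.comp_apply, swap_apply_left, h0]
  omega

theorem psum_qshift_right : psum (qshift n α) (b + 1) = psum (qshift n α) (a + 1) + 1 := by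
  rw [psum_succ, qshift_apply_of_val_eq_succ α hab, hab, if_neg h1, if_pos h0]

end NonzeroRight

theorem dom_of_dom_comp_swap {β γ : Fin n → ℕ} (h0 : α a = 0) (h1 : Dom n (α ∘ swap a b) γ)
    (hβ : ∀ j, j ≠ a → j ≠ b → β j = γ j) (hsum : β a + β b = γ a + γ b) : Dom n α β := by
  have hβγ : ∀ k, k ≠ (b : ℕ) → psum β k = psum γ k := fun k => psum_eq_of_eqOn_pair hab hβ hsum
  rw [dom_iff]
  intro p
  rcases eq_or_ne p a with rfl | hpa
  · calc psum α (p + 1) = psum (α ∘ swap p b) p := by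
          rw [psum_succ, h0, add_zero, psum_comp_swap hab (by omega)]
      _ ≤ psum γ p := h1.psum_le p.isLt.le
      _ = psum β p := (hβγ p (by omega)).symm
      _ ≤ psum β (p + 1) := by rw [psum_succ]; omega
  · have hk : (p : ℕ) + 1 ≠ b := fun h => hpa (Fin.ext (by omega))
    rw [← psum_comp_swap hab hk, hβγ _ hk]
    exact dom_iff.1 h1 p

theorem dom_qshift_of_dom_qshift_comp_swap {β γ : Fin n → ℕ} (h0 : α a = 0)
    (h2 : Dom n γ (qshift n (α ∘ swap a b))) (h3 : γ b = 0)
    (hβ : ∀ j, j ≠ a → j ≠ b → β j = γ j) (hsum : β a + β b = γ a + γ b) (hlt : β a < γ a) :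
    Dom n β (qshift n α) := by
  have hβγ : ∀ k, k ≠ (b : ℕ) → psum β k = psum γ k := fun k => psum_eq_of_eqOn_pair hab hβ hsum
  have hβa : psum β (a + 1) < psum γ (a + 1) := by
    rw [psum_succ, psum_succ, hβγ a (by omega)]
    omega
  rw [dom_iff] at h2 ⊢
  by_cases h1 : α b = 0
  · rw [show α ∘ swap a b = α from funext (apply_swap_eq_self (h0.trans h1.symm))] at h2
    intro p
    rcases eq_or_ne p a with rfl | hpa
    · exact hβa.le.trans (h2 p)
    · exact (hβγ _ fun h => hpa (Fin.ext (by omega))).trans_le (h2 p)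
  intro p
  rcases eq_or_ne p a with rfl | hpa
  · have := h2 p
    rw [psum_qshift_comp_swap_left hab h0 h1] at this
    omega
  rcases eq_or_ne p b with rfl | hpb
  · calc psum β (p + 1) = psum γ (a + 1) := by rw [hβγ _ (by omega), psum_succ, h3, add_zero, hab]
      _ ≤ psum (qshift n (α ∘ swap a p)) (a + 1) := h2 a
      _ = psum (qshift n α) (p + 1) := by
        rw [psum_qshift_comp_swap_left hab h0 h1, psum_qshift_right hab h0 h1]
  · rw [hβγ _ fun h => hpa (Fin.ext (by omega)), ← psum_qshift_comp_swap_of_ne hab h0 h1 hpa hpb]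
    exact h2 p

end AdjacentSwap

end WeakComposition

-- Since `αᵢ = 0`, Hivert's swap `s̃ᵢ(α)` is the transposition of the entries `i` and `i + 1`.
open WeakComposition in
/-- Lemma 6 of the paper: let `α` be a weak composition with
`αᵢ = 0`, and let `γ` satisfy `s̃ᵢ(α) ⊴ γ ⊴ qshift(s̃ᵢ(α))` with `γᵢ₊₁ = 0` and
`γᵢ > 0`.  Then any weak composition `β` with `βⱼ = γⱼ` for `j ∉ {i, i+1}`,
`0 ≤ βᵢ ≤ γᵢ − 1`, and `βᵢ₊₁ = γᵢ − βᵢ` satisfies `α ⊴ β ⊴ qshift(α)`.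
Since `αᵢ = 0`, Hivert's swap `s̃ᵢ(α)` is just `α` with entries `i, i+1`
exchanged. -/
theorem lemma_siqshift2 (n i : ℕ) (hi : i + 1 < n) (α γ β : Fin n → ℕ)
    (h0 : α ⟨i, by omega⟩ = 0)
    (h1 : Dom n (α ∘ Equiv.swap (⟨i, by omega⟩ : Fin n) ⟨i + 1, hi⟩) γ)
    (h2 : Dom n γ (qshift n (α ∘ Equiv.swap (⟨i, by omega⟩ : Fin n) ⟨i + 1, hi⟩)))
    (h3 : γ ⟨i + 1, hi⟩ = 0) (h4 : 0 < γ ⟨i, by omega⟩)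
    (h5 : ∀ j : Fin n, j ≠ ⟨i, by omega⟩ → j ≠ ⟨i + 1, hi⟩ → β j = γ j)
    (h6 : β ⟨i, by omega⟩ ≤ γ ⟨i, by omega⟩ - 1)
    (h7 : β ⟨i + 1, hi⟩ = γ ⟨i, by omega⟩ - β ⟨i, by omega⟩) :
    Dom n α β ∧ Dom n β (qshift n α) := by
  have hsum : β ⟨i, by omega⟩ + β ⟨i + 1, hi⟩ = γ ⟨i, by omega⟩ + γ ⟨i + 1, hi⟩ := by omega
  exact ⟨dom_of_dom_comp_swap rfl h0 h1 h5 hsum,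
    dom_qshift_of_dom_qshift_comp_swap rfl h0 h2 h3 h5 hsum (by omega)⟩
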